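/- arXiv:2605.04855 — 2 statements merged into one kernel-verified Lean document; each statement's English description precedes it below -/
import Mathlib

section
/- Let (G,c) be a W-state graph and let G_m be the spanning subgraph of monochromatic edges. Then every vertex of G_m is inessential, i.e., for every vertex v there exists a maximum matching of G_m not covering v. -/
/-! Multigraphs (parallel edges allowed, no loops) with half-edge 2-colourings,
    matchings, W-state graphs and W-cones, following the paper. -/

structure Multigraph (V E : Type) where
  fst : E → V
  snd : E → V
  no_loop : ∀ e, fst e ≠ snd e

namespace Multigraph

variable {V E : Type} (G : Multigraph V E)

/-- Edge `e` is incident with vertex `v`. -/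
def Inc (e : E) (v : V) : Prop := G.fst e = v ∨ G.snd e = v

/-- Adjacency using only edges in the edge set `F`. -/
def AdjIn (F : Set E) (u v : V) : Prop :=
  u ≠ v ∧ ∃ e ∈ F, G.Inc e u ∧ G.Inc e v

def Adj (u v : V) : Prop := G.AdjIn Set.univ u v

/-- Reachability inside the vertex set `S`, using only edges in `F`. -/
def ReachOn (F : Set E) (S : Set V) (u v : V) : Prop :=
  Relation.ReflTransGen (fun a b => a ∈ S ∧ b ∈ S ∧ G.AdjIn F a b) u v

/-- The subgraph with edge set `F` induced on the vertex set `S` is connected. -/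
def ConnectedOn (F : Set E) (S : Set V) : Prop :=
  ∀ u ∈ S, ∀ v ∈ S, G.ReachOn F S u v

def Connected : Prop := G.ConnectedOn Set.univ Set.univ

/-- `K` is a connected component of the subgraph with edge set `F` induced on `S`. -/
def IsCompOn (F : Set E) (S : Set V) (K : Set V) : Prop :=
  ∃ v ∈ S, K = {u | u ∈ S ∧ G.ReachOn F S u v}

def IsMatching (M : Set E) : Prop :=
  ∀ e ∈ M, ∀ f ∈ M, e ≠ f → ∀ v : V, ¬ (G.Inc e v ∧ G.Inc f v)

/-- `M` is a perfect matching of the subgraph of `G` induced on `S`. -/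
def IsPerfectMatchingOn (S : Set V) (M : Set E) : Prop :=
  (∀ e ∈ M, G.fst e ∈ S ∧ G.snd e ∈ S) ∧
  ∀ v ∈ S, ∃! e, e ∈ M ∧ G.Inc e v

def IsPerfectMatching (M : Set E) : Prop :=
  G.IsPerfectMatchingOn Set.univ M

/-- Every edge lies in some perfect matching. -/
def MatchingCovered : Prop :=
  ∀ e : E, ∃ M : Set E, G.IsPerfectMatching M ∧ e ∈ M

/-- The subgraph with edge set `F` induced on `K` is factor-critical. -/
def FactorCriticalOn (F : Set E) (K : Set V) : Prop :=
  ∀ v ∈ K, ∃ M : Set E, M ⊆ F ∧ G.IsPerfectMatchingOn (K \ {v}) M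

def FactorCritical : Prop := G.FactorCriticalOn Set.univ Set.univ

/-- `M` is a maximum matching among matchings using only edges in `F`. -/
def IsMaxMatchingIn (F M : Set E) : Prop :=
  M ⊆ F ∧ G.IsMatching M ∧
  ∀ N : Set E, N ⊆ F → G.IsMatching N → N.ncard ≤ M.ncard

/-- Half-edge 2-colourings are functions `c : E → V → Bool`
    (`true` = red, `false` = blue; only the values at endpoints matter). -/
def Bichromatic (c : E → V → Bool) (e : E) : Prop :=
  c e (G.fst e) ≠ c e (G.snd e)

/-- The monochromatic edges. -/
def MonoEdges (c : E → V → Bool) : Set E := {e | ¬ G.Bichromatic c e}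

/-- Every vertex has an incident red half-edge. -/
def VertexCond (c : E → V → Bool) : Prop :=
  ∀ v : V, ∃ e : E, G.Inc e v ∧ c e v = true

/-- Every perfect matching contains exactly one bichromatic edge. -/
def MatchingCond (c : E → V → Bool) : Prop :=
  ∀ M : Set E, G.IsPerfectMatching M → ∃! e, e ∈ M ∧ G.Bichromatic c e

/-- All monochromatic edges are blue. -/
def NoRedMono (c : E → V → Bool) : Prop :=
  ∀ e : E, ¬ G.Bichromatic c e → c e (G.fst e) = false

/-- W-state graph. -/
def IsWState (c : E → V → Bool) : Prop :=
  G.MatchingCovered ∧ G.MatchingCond c ∧ G.VertexCond c ∧ G.NoRedMono c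

def Universal (v : V) : Prop := ∀ u : V, u ≠ v → G.Adj u v

/-- W-cone with apex `v`. -/
def IsWConeWithApex (c : E → V → Bool) (v : V) : Prop :=
  G.MatchingCovered ∧ G.Universal v ∧
  (∀ e : E, G.Bichromatic c e ↔ G.Inc e v) ∧
  G.VertexCond c ∧ G.NoRedMono c

def IsWCone (c : E → V → Bool) : Prop := ∃ v : V, G.IsWConeWithApex c v

/-- `e` and `f` are parallel edges (same pair of endpoints). -/
def Parallel (e f : E) : Prop :=
  (G.fst e = G.fst f ∧ G.snd e = G.snd f) ∨
  (G.fst e = G.snd f ∧ G.snd e = G.fst f)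

/-- The cut `δ(X)`. -/
def CutEdges (X : Set V) : Set E :=
  {e | (G.fst e ∈ X ∧ G.snd e ∉ X) ∨ (G.fst e ∉ X ∧ G.snd e ∈ X)}

/-- `δ(X)` is a tight cut. -/
def IsTightCut (X : Set V) : Prop :=
  ∀ M : Set E, G.IsPerfectMatching M → ∃! e, e ∈ M ∧ e ∈ G.CutEdges X

def Bipartite : Prop :=
  ∃ f : V → Bool, ∀ e : E, f (G.fst e) ≠ f (G.snd e)

/-- A brick: non-bipartite matching-covered graph with no non-trivial tight cut. -/
def IsBrick : Prop :=
  G.MatchingCovered ∧ ¬ G.Bipartite ∧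
  ∀ X : Set V, 2 ≤ X.ncard → 2 ≤ (Set.univ \ X).ncard → ¬ G.IsTightCut X

end Multigraph

/-! A vertex `v` carries a red half-edge `e`; since monochromatic edges are blue, `e` is
bichromatic. Extend `e` to a perfect matching `M`. Then `M \ {e}` is monochromatic and misses `v`,
and it is maximum: a monochromatic matching is never perfect, because every perfect matching
contains a bichromatic edge, so it has fewer than `|V| / 2 = |M|` edges. -/

lemma Set.nat_card_prod_bool {α : Type*} (s : Set α) : Nat.card (s × Bool) = 2 * s.ncard := by
  rw [Nat.card_prod, Nat.card_coe_set_eq, Nat.card_eq_fintype_card, Fintype.card_bool, mul_comm]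

namespace Multigraph

variable {V E : Type} {G : Multigraph V E}

def endpoint (G : Multigraph V E) (e : E) (b : Bool) : V := if b then G.fst e else G.snd e

lemma inc_endpoint (e : E) (b : Bool) : G.Inc e (G.endpoint e b) := by
  cases b
  · exact Or.inr rfl
  · exact Or.inl rfl

lemma inc_iff_exists_endpoint_eq {e : E} {v : V} : G.Inc e v ↔ ∃ b, G.endpoint e b = v :=
  ⟨fun h => h.elim (fun h => ⟨true, h⟩) (fun h => ⟨false, h⟩), fun ⟨_, h⟩ => h ▸ inc_endpoint _ _⟩

lemma endpoint_injective (e : E) : Function.Injective (G.endpoint e) := by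
  have := G.no_loop e
  intro b b'
  cases b <;> cases b' <;> simp_all [endpoint, eq_comm]

lemma IsPerfectMatchingOn.isMatching {S : Set V} {M : Set E}
    (hM : G.IsPerfectMatchingOn S M) : G.IsMatching M := by
  rintro e he f hf hne v ⟨hev, hfv⟩
  have hvS : v ∈ S := by
    rcases hev with rfl | rfl
    exacts [(hM.1 e he).1, (hM.1 e he).2]
  exact hne ((hM.2 v hvS).unique ⟨he, hev⟩ ⟨hf, hfv⟩)

lemma IsPerfectMatching.not_inc_of_mem_diff {M : Set E} {e f : E} {v : V}
    (hM : G.IsPerfectMatching M) (he : e ∈ M) (hev : G.Inc e v) (hf : f ∈ M \ {e}) :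
    ¬ G.Inc f v := fun hfv =>
  hf.2 ((hM.2 v (Set.mem_univ v)).unique ⟨hf.1, hfv⟩ ⟨he, hev⟩)

section Counting

variable {N : Set E}

lemma IsMatching.injective_endpoint (hN : G.IsMatching N) :
    Function.Injective fun p : N × Bool => G.endpoint p.1 p.2 := by
  rintro ⟨⟨e, he⟩, b⟩ ⟨⟨f, hf⟩, b'⟩ (hEq : G.endpoint e b = G.endpoint f b')
  obtain rfl : e = f := by
    by_contra hne
    exact hN e he f hf hne _ ⟨inc_endpoint e b, hEq ▸ inc_endpoint f b'⟩
  rw [endpoint_injective e hEq]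

lemma IsMatching.isPerfectMatching_iff (hN : G.IsMatching N) :
    G.IsPerfectMatching N ↔ Function.Surjective fun p : N × Bool => G.endpoint p.1 p.2 := by
  constructor
  · intro hP v
    obtain ⟨e, ⟨he, hev⟩, -⟩ := hP.2 v (Set.mem_univ v)
    obtain ⟨b, rfl⟩ := inc_iff_exists_endpoint_eq.1 hev
    exact ⟨(⟨e, he⟩, b), rfl⟩
  · refine fun hsurj => ⟨fun _ _ => ⟨trivial, trivial⟩, fun v _ => ?_⟩
    obtain ⟨⟨⟨e, he⟩, b⟩, rfl⟩ := hsurj v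
    refine ⟨e, ⟨he, inc_endpoint e b⟩, fun f ⟨hf, hfv⟩ => ?_⟩
    by_contra hne
    exact hN f hf e he hne _ ⟨hfv, inc_endpoint e b⟩

variable [Finite V]

lemma IsMatching.two_mul_ncard_le (hN : G.IsMatching N) : 2 * N.ncard ≤ Nat.card V := by
  rw [← Set.nat_card_prod_bool]
  exact Nat.card_le_card_of_injective _ hN.injective_endpoint

lemma IsMatching.isPerfectMatching_iff_two_mul_ncard_eq (hN : G.IsMatching N) :
    G.IsPerfectMatching N ↔ 2 * N.ncard = Nat.card V := by
  rw [hN.isPerfectMatching_iff, ← Set.nat_card_prod_bool]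
  exact ⟨fun hsurj => Nat.card_eq_of_bijective _ ⟨hN.injective_endpoint, hsurj⟩,
    fun hcard => ((Nat.bijective_iff_injective_and_card _).2 ⟨hN.injective_endpoint, hcard⟩).2⟩

end Counting

section WState

variable {c : E → V → Bool}

lemma exists_inc_bichromatic (hv : G.VertexCond c) (hr : G.NoRedMono c) (v : V) :
    ∃ e, G.Inc e v ∧ G.Bichromatic c e := by
  obtain ⟨e, hev, hred⟩ := hv v
  refine ⟨e, hev, fun hsame => ?_⟩
  have hfst : c e (G.fst e) = false := hr e (· hsame)
  have hsnd : c e (G.snd e) = false := hsame ▸ hfst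
  rcases hev with rfl | rfl <;> simp_all

lemma MatchingCond.two_mul_ncard_lt [Finite V] (hc : G.MatchingCond c) {N : Set E}
    (hN : G.IsMatching N) (hNmono : N ⊆ G.MonoEdges c) : 2 * N.ncard < Nat.card V := by
  refine hN.two_mul_ncard_le.lt_of_ne fun hcard => ?_
  obtain ⟨e, ⟨he, hbi⟩, -⟩ := hc N (hN.isPerfectMatching_iff_two_mul_ncard_eq.2 hcard)
  exact hNmono he hbi

lemma MatchingCond.isMaxMatchingIn_monoEdges_diff [Finite V] (hc : G.MatchingCond c)
    {M : Set E} {e : E} (hM : G.IsPerfectMatching M) (he : e ∈ M) (hbi : G.Bichromatic c e) :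
    G.IsMaxMatchingIn (G.MonoEdges c) (M \ {e}) := by
  obtain ⟨_, -, huniq⟩ := hc M hM
  have hMmatch := hM.isMatching
  refine ⟨fun f hf hfbi => hf.2 ?_, fun a ha b hb => hMmatch a ha.1 b hb.1, fun N hNmono hN => ?_⟩
  · exact (huniq f ⟨hf.1, hfbi⟩).trans (huniq e ⟨he, hbi⟩).symm
  · have hlt := hc.two_mul_ncard_lt hN hNmono
    have hM2 := hMmatch.isPerfectMatching_iff_two_mul_ncard_eq.1 hM
    rw [Set.ncard_sdiff_singleton_of_mem he]
    omega

end WState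

end Multigraph

theorem stmt6_general {V E : Type} [Fintype V] (G : Multigraph V E)
    (c : E → V → Bool) (h : G.IsWState c) :
    ∀ v : V, ∃ M : Set E, G.IsMaxMatchingIn (G.MonoEdges c) M ∧
      ∀ e ∈ M, ¬ G.Inc e v := by
  obtain ⟨hcovered, hc, hvertex, hnored⟩ := h
  intro v
  obtain ⟨e, hev, hbi⟩ := G.exists_inc_bichromatic hvertex hnored v
  obtain ⟨M, hM, he⟩ := hcovered e
  exact ⟨M \ {e}, hc.isMaxMatchingIn_monoEdges_diff hM he hbi,
    fun _ hf => hM.not_inc_of_mem_diff he hev hf⟩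

/-- In a W-state graph, every vertex of the monochromatic subgraph
`G_m` is inessential: some maximum matching of `G_m` misses it. -/
theorem stmt6 {V E : Type} [Fintype V] [Fintype E] (G : Multigraph V E)
    (c : E → V → Bool) (h : G.IsWState c) :
    ∀ v : V, ∃ M : Set E, G.IsMaxMatchingIn (G.MonoEdges c) M ∧
      ∀ e ∈ M, ¬ G.Inc e v :=
  stmt6_general G c h
end

section
/- Let (G,c) be a W-state graph on n vertices and G_m its spanning subgraph of monochromatic edges. Then G_m is the disjoint union of exactly two factor-critical connected components. -/
/-!
Every vertex `v` has a red half-edge, which lies on a bichromatic edge `e` (monochromatic edges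
are blue); `e` lies in a perfect matching `M`, whose other edges are then monochromatic. So
`M \ {e}` is a monochromatic matching missing exactly the ends of `e`, while the monochromatic
graph `G_m` has no perfect matching at all. By Tutte's theorem `G_m` has a barrier `S`. It cannot
contain a vertex `s`: adding the edge `e` at `s` does not change `G_m - S`, but gives a graph
with the perfect matching `M`. So `S = ∅`, i.e. `G_m` has a component `K` of odd order. Then the
ends of `e` lie in different components, or else `M \ {e}` would restrict to a matching of `K`
missing zero or two vertices. Consequently `M \ {e}` restricts to a near-perfect matching of the
component of `v` missing only `v`: all components are factor-critical, hence odd, and a component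
avoiding both ends of a fixed `e` would be even. So the components are those of the ends of `e`.
-/

namespace SimpleGraph

variable {V : Type} {T : SimpleGraph V}

lemma IsTutteViolator.exists_odd_ncard (h : T.IsTutteViolator ∅) :
    ∃ K : Set V, Odd K.ncard ∧ ∀ x y, T.Adj x y → (x ∈ K ↔ y ∈ K) := by
  obtain ⟨C, hC⟩ := Set.nonempty_of_ncard_ne_zero (by simpa [IsTutteViolator] using h.ne')
  refine ⟨Subtype.val '' C.supp, by rwa [Set.ncard_image_of_injective _ Subtype.val_injective],
    fun x y hxy => ?_⟩
  have hadj : ((⊤ : T.Subgraph).deleteVerts ∅).coe.Adj ⟨x, by simp⟩ ⟨y, by simp⟩ := by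
    simpa using hxy
  simpa using C.mem_supp_congr_adj hadj

lemma IsTutteViolator.sup_edge [Finite V] {u : Set V} {x y : V} (h : T.IsTutteViolator u)
    (hxy : x ∈ u ∨ y ∈ u) : (T ⊔ edge x y).IsTutteViolator u := by
  have hle : ((⊤ : (T ⊔ edge x y).Subgraph).deleteVerts u).coe ≤
      ((⊤ : T.Subgraph).deleteVerts u).coe := by
    rintro ⟨v, hv⟩ ⟨w, hw⟩ hvw
    have hvu : v ∉ u := hv.2
    have hwu : w ∉ u := hw.2
    simp only [Subgraph.coe_adj, Subgraph.deleteVerts_adj, Subgraph.top_adj, sup_adj,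
      edge_adj] at hvw
    show ((⊤ : T.Subgraph).deleteVerts u).Adj v w
    simp only [Subgraph.deleteVerts_adj, Subgraph.top_adj]
    aesop
  exact lt_of_lt_of_le h (ncard_oddComponents_mono _ hle)

end SimpleGraph

namespace Multigraph

variable {V E : Type} {G : Multigraph V E}

section Incidence

lemma inc_fst (e : E) : G.Inc e (G.fst e) := Or.inl rfl

lemma inc_snd (e : E) : G.Inc e (G.snd e) := Or.inr rfl

lemma Inc.eq_of_ne {e : E} {v x y : V} (hv : G.Inc e v) (hx : G.Inc e x) (hy : G.Inc e y)
    (hxv : x ≠ v) (hyv : y ≠ v) : x = y := by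
  unfold Inc at *
  grind

lemma AdjIn.symm {F : Set E} {u v : V} (h : G.AdjIn F u v) : G.AdjIn F v u :=
  let ⟨huv, e, he, hu, hv⟩ := h
  ⟨huv.symm, e, he, hv, hu⟩

lemma adjIn_fst_snd {F : Set E} {e : E} (he : e ∈ F) : G.AdjIn F (G.fst e) (G.snd e) :=
  ⟨G.no_loop e, e, he, inc_fst e, inc_snd e⟩

lemma mem_iff_of_disjoint_cutEdges {F : Set E} {K : Set V} (hK : Disjoint F (G.CutEdges K))
    {e : E} (he : e ∈ F) : G.fst e ∈ K ↔ G.snd e ∈ K := by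
  have : e ∉ G.CutEdges K := Set.disjoint_left.mp hK he
  simp only [CutEdges, Set.mem_ofPred_eq] at this
  tauto

lemma AdjIn.mem_iff {F : Set E} {K : Set V} (hK : Disjoint F (G.CutEdges K)) {u v : V}
    (h : G.AdjIn F u v) : u ∈ K ↔ v ∈ K := by
  obtain ⟨-, e, he, hu, hv⟩ := h
  have := mem_iff_of_disjoint_cutEdges hK he
  rcases hu with rfl | rfl <;> rcases hv with rfl | rfl <;> tauto

end Incidence

section Reachability

variable {F : Set E}

lemma ReachOn.symm {u v : V} (h : G.ReachOn F Set.univ u v) : G.ReachOn F Set.univ v u := by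
  induction h with
  | refl => exact Relation.ReflTransGen.refl
  | tail _ hstep ih => exact Relation.ReflTransGen.head ⟨hstep.2.1, hstep.1, hstep.2.2.symm⟩ ih

lemma ReachOn.trans {u v w : V} (h : G.ReachOn F Set.univ u v)
    (h' : G.ReachOn F Set.univ v w) : G.ReachOn F Set.univ u w :=
  Relation.ReflTransGen.trans h h'

lemma ReachOn.mem_iff {K : Set V} (hK : Disjoint F (G.CutEdges K)) {u v : V}
    (h : G.ReachOn F Set.univ u v) : u ∈ K ↔ v ∈ K := by
  induction h with
  | refl => rfl
  | tail _ hstep ih => exact ih.trans (hstep.2.2.mem_iff hK)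

def component (G : Multigraph V E) (F : Set E) (v : V) : Set V :=
  {u | G.ReachOn F Set.univ u v}

lemma mem_component_self (v : V) : v ∈ G.component F v := Relation.ReflTransGen.refl

lemma isCompOn_component (v : V) : G.IsCompOn F Set.univ (G.component F v) :=
  ⟨v, trivial, by ext; simp [component]⟩

lemma disjoint_cutEdges_component (v : V) : Disjoint F (G.CutEdges (G.component F v)) := by
  refine Set.disjoint_left.mpr fun e he hcut => ?_
  have hreach : G.ReachOn F Set.univ (G.fst e) (G.snd e) :=
    Relation.ReflTransGen.single ⟨trivial, trivial, adjIn_fst_snd he⟩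
  have : G.fst e ∈ G.component F v ↔ G.snd e ∈ G.component F v :=
    ⟨hreach.symm.trans, hreach.trans⟩
  simp only [CutEdges, Set.mem_ofPred_eq] at hcut
  tauto

end Reachability

namespace IsPerfectMatchingOn

variable {S : Set V} {M : Set E}

lemma eq_of_inc (hM : G.IsPerfectMatchingOn S M) {e f : E} {v : V} (he : e ∈ M) (hf : f ∈ M)
    (hev : G.Inc e v) (hfv : G.Inc f v) : e = f := by
  have hv : v ∈ S := by rcases hev with rfl | rfl; exacts [(hM.1 e he).1, (hM.1 e he).2]
  obtain ⟨g, -, hg⟩ := hM.2 v hv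
  exact (hg e ⟨he, hev⟩).trans (hg f ⟨hf, hfv⟩).symm

lemma sdiff_singleton (hM : G.IsPerfectMatchingOn S M) {e : E} (he : e ∈ M) :
    G.IsPerfectMatchingOn (S \ {G.fst e, G.snd e}) (M \ {e}) := by
  have hends : ∀ f ∈ M \ {e}, ∀ v, G.Inc f v → v ∈ S \ {G.fst e, G.snd e} := by
    rintro f ⟨hfM, hfe⟩ v hfv
    refine ⟨by rcases hfv with rfl | rfl; exacts [(hM.1 f hfM).1, (hM.1 f hfM).2], ?_⟩
    rintro (rfl | rfl)
    exacts [hfe (hM.eq_of_inc hfM he hfv (inc_fst e)),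
      hfe (hM.eq_of_inc hfM he hfv (inc_snd e))]
  refine ⟨fun f hf => ⟨hends f hf _ (inc_fst f), hends f hf _ (inc_snd f)⟩, ?_⟩
  rintro v ⟨hvS, hve⟩
  obtain ⟨f, ⟨hfM, hfv⟩, hf⟩ := hM.2 v hvS
  have hfe : f ≠ e := by
    rintro rfl
    rcases hfv with rfl | rfl <;> simp at hve
  exact ⟨f, ⟨⟨hfM, hfe⟩, hfv⟩, fun g hg => hf g ⟨hg.1.1, hg.2⟩⟩

lemma even_ncard [Finite V] (hM : G.IsPerfectMatchingOn S M) : Even S.ncard := by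
  induction h : S.ncard using Nat.strong_induction_on generalizing S M with
  | _ n ih =>
    obtain rfl | ⟨v, hv⟩ := S.eq_empty_or_nonempty
    · simp [← h]
    obtain ⟨e, ⟨heM, -⟩, -⟩ := hM.2 v hv
    have hsub : {G.fst e, G.snd e} ⊆ S := Set.insert_subset (hM.1 e heM).1
      (Set.singleton_subset_iff.mpr (hM.1 e heM).2)
    have hpair : ({G.fst e, G.snd e} : Set V).ncard = 2 := Set.ncard_pair (G.no_loop e)
    have hcard : (S \ {G.fst e, G.snd e}).ncard = n - 2 := by
      rw [Set.ncard_sdiff hsub, hpair, h]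
    have h2 : 2 ≤ n := h ▸ hpair ▸ Set.ncard_le_ncard hsub
    obtain ⟨k, hk⟩ := ih (n - 2) (by omega) (hM.sdiff_singleton heM) hcard
    exact ⟨k + 1, by omega⟩

lemma inter {K : Set V} (hM : G.IsPerfectMatchingOn S M) (hK : Disjoint M (G.CutEdges K)) :
    G.IsPerfectMatchingOn (S ∩ K) {e ∈ M | G.fst e ∈ K} := by
  refine ⟨fun e ⟨heM, he⟩ => ⟨⟨(hM.1 e heM).1, he⟩,
    ⟨(hM.1 e heM).2, (mem_iff_of_disjoint_cutEdges hK heM).mp he⟩⟩, ?_⟩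
  rintro v ⟨hvS, hvK⟩
  obtain ⟨e, ⟨heM, hev⟩, he⟩ := hM.2 v hvS
  have hfst : G.fst e ∈ K := by
    rcases hev with rfl | rfl
    exacts [hvK, (mem_iff_of_disjoint_cutEdges hK heM).mpr hvK]
  exact ⟨e, ⟨⟨heM, hfst⟩, hev⟩, fun f hf => he f ⟨hf.1.1, hf.2⟩⟩

lemma existsUnique_adjIn (hM : G.IsPerfectMatchingOn S M) {v : V} (hv : v ∈ S) :
    ∃! w, G.AdjIn M v w := by
  obtain ⟨e, ⟨heM, hev⟩, -⟩ := hM.2 v hv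
  refine existsUnique_of_exists_of_unique ?_ ?_
  · rcases hev with rfl | rfl
    exacts [⟨_, adjIn_fst_snd heM⟩, ⟨_, (adjIn_fst_snd heM).symm⟩]
  · rintro w₁ w₂ ⟨hw₁, f₁, hf₁, hf₁v, hf₁w⟩ ⟨hw₂, f₂, hf₂, hf₂v, hf₂w⟩
    obtain rfl := hM.eq_of_inc hf₁ hf₂ hf₁v hf₂v
    exact hf₁v.eq_of_ne hf₁w hf₂w hw₁.symm hw₂.symm

end IsPerfectMatchingOn

lemma FactorCriticalOn.odd_ncard [Finite V] {F : Set E} {K : Set V}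
    (hK : G.FactorCriticalOn F K) {v : V} (hv : v ∈ K) : Odd K.ncard := by
  obtain ⟨M, -, hM⟩ := hK v hv
  have := hM.even_ncard
  rw [Set.ncard_sdiff_singleton_of_mem hv] at this
  have : 0 < K.ncard := (Set.ncard_pos (Set.toFinite K)).mpr ⟨v, hv⟩
  grind

lemma IsPerfectMatching.even_ncard_sdiff [Finite V] {M : Set E} {e : E} {K : Set V}
    (hM : G.IsPerfectMatching M) (heM : e ∈ M) (hK : Disjoint (M \ {e}) (G.CutEdges K)) :
    Even (K \ {G.fst e, G.snd e}).ncard := by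
  have heven := ((IsPerfectMatchingOn.sdiff_singleton hM heM).inter hK).even_ncard
  rwa [show (Set.univ \ {G.fst e, G.snd e}) ∩ K = K \ {G.fst e, G.snd e} by
    ext; simp [and_comm]] at heven

def toSimpleGraph (G : Multigraph V E) (F : Set E) : SimpleGraph V where
  Adj := G.AdjIn F
  symm := ⟨fun _ _ h => h.symm⟩
  loopless := ⟨fun _ h => h.1 rfl⟩

lemma IsPerfectMatching.isPerfectMatching_toSubgraph {M : Set E} (hM : G.IsPerfectMatching M)
    {T : SimpleGraph V} (hle : G.toSimpleGraph M ≤ T) :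
    (T.toSubgraph _ hle).IsPerfectMatching :=
  SimpleGraph.Subgraph.isPerfectMatching_iff.mpr fun v =>
    IsPerfectMatchingOn.existsUnique_adjIn hM (Set.mem_univ v)

lemma toSimpleGraph_le_sup_edge {F M : Set E} {e : E} (hMe : M \ {e} ⊆ F) :
    G.toSimpleGraph M ≤ G.toSimpleGraph F ⊔ SimpleGraph.edge (G.fst e) (G.snd e) := by
  rintro x y ⟨hxy, f, hfM, hfx, hfy⟩
  by_cases hfe : f = e
  · subst hfe
    refine Or.inr ((SimpleGraph.edge_adj _ _ _ _).mpr ⟨?_, hxy⟩)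
    rcases hfx with rfl | rfl <;> rcases hfy with rfl | rfl <;> tauto
  · exact Or.inl ⟨hxy, f, hMe ⟨hfM, hfe⟩, hfx, hfy⟩

lemma exists_subset_isPerfectMatching {F : Set E} {M : (G.toSimpleGraph F).Subgraph}
    (hM : M.IsPerfectMatching) : ∃ N ⊆ F, G.IsPerfectMatching N := by
  have hedge : ∀ z ∈ M.edgeSet, ∃ e ∈ F, ∀ t ∈ z, G.Inc e t := by
    intro z hz
    induction z using Sym2.ind with
    | h x y =>
      obtain ⟨-, e, he, hx, hy⟩ := M.adj_sub hz
      exact ⟨e, he, by simp [hx, hy]⟩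
  choose g hgF hg using hedge
  refine ⟨Set.range fun z : M.edgeSet => g z z.2, ?_, fun _ _ => ⟨trivial, trivial⟩, fun v _ => ?_⟩
  · rintro _ ⟨z, rfl⟩
    exact hgF z z.2
  obtain ⟨w, hvw, hw⟩ := SimpleGraph.Subgraph.isPerfectMatching_iff.mp hM v
  refine ⟨g s(v, w) hvw, ⟨⟨⟨_, hvw⟩, rfl⟩, hg _ hvw v (Sym2.mem_mk_left v w)⟩, ?_⟩
  rintro _ ⟨⟨⟨z, hz⟩, rfl⟩, hzv⟩
  have hvz : v ∈ z := by
    induction z using Sym2.ind with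
    | h x y =>
      by_contra hv
      simp only [Sym2.mem_iff, not_or] at hv
      exact (M.adj_sub hz).1 (hzv.eq_of_ne (hg _ hz x (Sym2.mem_mk_left x y))
        (hg _ hz y (Sym2.mem_mk_right x y)) (Ne.symm hv.1) (Ne.symm hv.2))
  obtain ⟨y, rfl⟩ := Sym2.mem_iff_exists.mp hvz
  obtain rfl := hw y hz
  rfl

section WState

variable {c : E → V → Bool}

lemma MatchingCond.nonempty (h : G.MatchingCond c) : Nonempty V := by
  by_contra hV
  rw [not_nonempty_iff] at hV
  obtain ⟨e, -⟩ := h ∅ ⟨by simp, fun v => isEmptyElim v⟩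
  exact isEmptyElim (G.fst e)

lemma MatchingCond.isMatchingFree (h : G.MatchingCond c) :
    (G.toSimpleGraph (G.MonoEdges c)).IsMatchingFree := by
  intro M hM
  obtain ⟨N, hNmono, hN⟩ := exists_subset_isPerfectMatching hM
  obtain ⟨e, ⟨heN, hbi⟩, -⟩ := h N hN
  exact hNmono heN hbi

lemma IsWState.exists_isPerfectMatching (h : G.IsWState c) (v : V) :
    ∃ M e, G.IsPerfectMatching M ∧ e ∈ M ∧ G.Inc e v ∧ M \ {e} ⊆ G.MonoEdges c := by
  obtain ⟨hcov, hcond, hvert, hnored⟩ := h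
  obtain ⟨e, hev, hred⟩ := hvert v
  -- monochromatic edges are blue at both ends, so the red half-edge lies on a bichromatic edge
  have hbi : G.Bichromatic c e := by
    by_contra hmono
    have hfst := hnored e hmono
    have hends : c e (G.fst e) = c e (G.snd e) := not_not.mp hmono
    rcases hev with rfl | rfl <;> simp_all
  obtain ⟨M, hM, heM⟩ := hcov e
  obtain ⟨b, -, hb⟩ := hcond M hM
  refine ⟨M, e, hM, heM, hev, fun f ⟨hfM, hfe⟩ hfbi => hfe ?_⟩
  exact (hb f ⟨hfM, hfbi⟩).trans (hb e ⟨heM, hbi⟩).symm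

open SimpleGraph in
theorem IsWState.exists_odd_ncard_disjoint_cutEdges [Finite V] (h : G.IsWState c) :
    ∃ K : Set V, Odd K.ncard ∧ Disjoint (G.MonoEdges c) (G.CutEdges K) := by
  obtain ⟨u, hu⟩ : ∃ u, (G.toSimpleGraph (G.MonoEdges c)).IsTutteViolator u := by
    simpa using mt tutte.mpr (not_exists.mpr h.2.1.isMatchingFree)
  obtain rfl | ⟨s, hs⟩ := u.eq_empty_or_nonempty
  · obtain ⟨K, hK, hadj⟩ := hu.exists_odd_ncard
    refine ⟨K, hK, Set.disjoint_left.mpr fun e he hcut => ?_⟩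
    have := hadj _ _ (adjIn_fst_snd he)
    simp only [CutEdges, Set.mem_ofPred_eq] at hcut
    tauto
  obtain ⟨M, e, hM, heM, hes, hMe⟩ := h.exists_isPerfectMatching s
  have hviol := hu.sup_edge (x := G.fst e) (y := G.snd e) (by rcases hes with rfl | rfl <;> tauto)
  exact absurd hviol <| not_isTutteViolator_of_isPerfectMatching
    (hM.isPerfectMatching_toSubgraph (toSimpleGraph_le_sup_edge hMe)) u

theorem IsWState.not_reachOn [Finite V] (h : G.IsWState c) {M : Set E} {e : E}
    (hM : G.IsPerfectMatching M) (heM : e ∈ M) (hMe : M \ {e} ⊆ G.MonoEdges c) :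
    ¬ G.ReachOn (G.MonoEdges c) Set.univ (G.fst e) (G.snd e) := by
  intro hreach
  obtain ⟨K, hK, hcut⟩ := h.exists_odd_ncard_disjoint_cutEdges
  have heven := hM.even_ncard_sdiff heM (hcut.mono_left hMe)
  by_cases hfst : G.fst e ∈ K
  · have hsub : {G.fst e, G.snd e} ⊆ K :=
      Set.insert_subset hfst (Set.singleton_subset_iff.mpr ((hreach.mem_iff hcut).mp hfst))
    have hpair : ({G.fst e, G.snd e} : Set V).ncard = 2 := Set.ncard_pair (G.no_loop e)
    have h2 : 2 ≤ K.ncard := hpair ▸ Set.ncard_le_ncard hsub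
    rw [Set.ncard_sdiff hsub, hpair] at heven
    obtain ⟨r, hr⟩ := heven
    obtain ⟨k, hk⟩ := hK
    omega
  · have hsnd : G.snd e ∉ K := fun hsnd => hfst ((hreach.mem_iff hcut).mpr hsnd)
    rw [sdiff_eq_left.mpr (by simp [hfst, hsnd])] at heven
    exact Nat.not_even_iff_odd.mpr hK heven

theorem IsWState.factorCriticalOn_component [Finite V] (h : G.IsWState c) (t : V) :
    G.FactorCriticalOn (G.MonoEdges c) (G.component (G.MonoEdges c) t) := by
  set K := G.component (G.MonoEdges c) t
  intro v hv
  obtain ⟨M, e, hM, heM, hev, hMe⟩ := h.exists_isPerfectMatching v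
  have hends : ¬ (G.fst e ∈ K ∧ G.snd e ∈ K) :=
    fun ⟨hfst, hsnd⟩ => h.not_reachOn hM heM hMe (hfst.trans hsnd.symm)
  refine ⟨{f ∈ M \ {e} | G.fst f ∈ K}, fun f hf => hMe hf.1, ?_⟩
  convert (IsPerfectMatchingOn.sdiff_singleton hM heM).inter
    ((disjoint_cutEdges_component t).mono_left hMe) using 1
  ext x
  simp only [Set.mem_sdiff, Set.mem_inter_iff, Set.mem_insert_iff, Set.mem_singleton_iff,
    Set.mem_univ, true_and]
  rcases hev with rfl | rfl <;> grind

end WState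

end Multigraph

theorem stmt8_general {V E : Type} [Fintype V] (G : Multigraph V E)
    (c : E → V → Bool) (h : G.IsWState c) :
    ∃ X X' : Set V, Disjoint X X' ∧ X ∪ X' = Set.univ ∧
      G.IsCompOn (G.MonoEdges c) Set.univ X ∧
      G.IsCompOn (G.MonoEdges c) Set.univ X' ∧
      G.FactorCriticalOn (G.MonoEdges c) X ∧
      G.FactorCriticalOn (G.MonoEdges c) X' := by
  open Multigraph in
  obtain ⟨u⟩ := h.2.1.nonempty
  obtain ⟨M, e, hM, heM, -, hMe⟩ := h.exists_isPerfectMatching u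
  have hends := h.not_reachOn hM heM hMe
  refine ⟨_, _, Set.disjoint_left.mpr fun x hfst hsnd => hends (hfst.symm.trans hsnd),
    Set.eq_univ_of_forall fun t => ?_, isCompOn_component (G.fst e),
    isCompOn_component (G.snd e), h.factorCriticalOn_component _, h.factorCriticalOn_component _⟩
  by_contra ht
  -- the component of `t` would be odd, yet `M \ {e}` restricts to a perfect matching of it
  have heven := hM.even_ncard_sdiff heM ((disjoint_cutEdges_component t).mono_left hMe)
  have hfst : G.fst e ∉ G.component (G.MonoEdges c) t := fun hK => ht (Or.inl hK.symm)
  have hsnd : G.snd e ∉ G.component (G.MonoEdges c) t := fun hK => ht (Or.inr hK.symm)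
  rw [sdiff_eq_left.mpr (by simp [hfst, hsnd])] at heven
  exact Nat.not_even_iff_odd.mpr
    ((h.factorCriticalOn_component t).odd_ncard (mem_component_self t)) heven

/-- In a W-state graph, the monochromatic subgraph `G_m` is the
disjoint union of exactly two factor-critical connected components. -/
theorem stmt8 {V E : Type} [Fintype V] [Fintype E] (G : Multigraph V E)
    (c : E → V → Bool) (h : G.IsWState c) :
    ∃ X X' : Set V, Disjoint X X' ∧ X ∪ X' = Set.univ ∧
      G.IsCompOn (G.MonoEdges c) Set.univ X ∧
      G.IsCompOn (G.MonoEdges c) Set.univ X' ∧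
      G.FactorCriticalOn (G.MonoEdges c) X ∧
      G.FactorCriticalOn (G.MonoEdges c) X' :=
  stmt8_general G c h
end
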